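/- arXiv:2211.09156 — 5 statements merged into one kernel-verified Lean document; each statement's English description precedes it below -/
import Mathlib

section
/- (Lemma 1, reachable-set form.) Let Ω : ℕ → Set Z be a sequence of measurement-updated initial sets for a dynamic agent satisfying Ω (t+1) ⊆ Reach 1 (Ω t) for all t ∈ ℕ. Then the forward reachable set predicted for a fixed absolute time τ is non-increasing in the measurement time: for all t₁ ≤ t₂ ≤ τ, Reach (τ - t₂) (Ω t₂) ⊆ Reach (τ - t₁) (Ω t₁). -/
/-- The forward reachable set operator: `Reach f 𝒰 0 S = S` and
`Reach f 𝒰 (k+1) S = { f z u | z ∈ Reach f 𝒰 k S, u ∈ 𝒰 }`. -/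
def Reach {Z U : Type*} (f : Z → U → Z) (𝒰 : Set U) : ℕ → Set Z → Set Z
  | 0, S => S
  | k + 1, S => {x | ∃ z ∈ Reach f 𝒰 k S, ∃ u ∈ 𝒰, x = f z u}

lemma reach_mono {Z U : Type*} (f : Z → U → Z) (𝒰 : Set U) :
    ∀ k : ℕ, ∀ {S T : Set Z}, S ⊆ T → Reach f 𝒰 k S ⊆ Reach f 𝒰 k T
  | 0, _, _, h => h
  | k + 1, S, T, h => fun x ⟨z, hz, u, hu, hx⟩ =>
      ⟨z, reach_mono f 𝒰 k h hz, u, hu, hx⟩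

lemma reach_one_comm {Z U : Type*} (f : Z → U → Z) (𝒰 : Set U) :
    ∀ (k : ℕ) (S : Set Z), Reach f 𝒰 k (Reach f 𝒰 1 S) = Reach f 𝒰 (k + 1) S
  | 0, S => by simp [Reach]
  | k + 1, S => by
      show {x | ∃ z ∈ Reach f 𝒰 k (Reach f 𝒰 1 S), ∃ u ∈ 𝒰, x = f z u} = _
      rw [reach_one_comm f 𝒰 k S]
      rfl

theorem reach_nonincreasing_in_measurement_time {Z U : Type*}
    (f : Z → U → Z) (𝒰 : Set U) (Ω : ℕ → Set Z)
    (hupd : ∀ t : ℕ, Ω (t + 1) ⊆ Reach f 𝒰 1 (Ω t)) :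
    ∀ t₁ t₂ τ : ℕ, t₁ ≤ t₂ → t₂ ≤ τ →
      Reach f 𝒰 (τ - t₂) (Ω t₂) ⊆ Reach f 𝒰 (τ - t₁) (Ω t₁) := by
  intro t₁ t₂
  induction t₂ with
  | zero => intro τ h1 h2; simp_all
  | succ n ih =>
    intro τ h1 h2
    rcases Nat.lt_or_ge t₁ (n + 1) with h | h
    · have ht₁n : t₁ ≤ n := Nat.lt_succ_iff.mp h
      calc Reach f 𝒰 (τ - (n + 1)) (Ω (n + 1))
          ⊆ Reach f 𝒰 (τ - (n + 1)) (Reach f 𝒰 1 (Ω n)) :=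
            reach_mono f 𝒰 _ (hupd n)
        _ = Reach f 𝒰 (τ - (n + 1) + 1) (Ω n) := reach_one_comm f 𝒰 _ _
        _ = Reach f 𝒰 (τ - n) (Ω n) := by
            rw [show τ - (n + 1) + 1 = τ - n from by omega]
        _ ⊆ Reach f 𝒰 (τ - t₁) (Ω t₁) := ih τ ht₁n (by omega)
    · have : t₁ = n + 1 := le_antisymm h1 h
      subst this; exact subset_rfl
end

section
/- (Lemma 1, safe-set form.) Let R be a finite index set of dynamic agents, and for each r ∈ R let Ωʳ : ℕ → Set Z satisfy Ωʳ (t+1) ⊆ Reach 1 (Ωʳ t) for all t. Let O ⊆ Z be a fixed static obstacle set, and define the predicted safe set for absolute time τ based on measurements at time t as Zˢ(τ, t) = ( (⋃_{r ∈ R} Reach (τ - t) (Ωʳ t)) ∪ O )ᶜ. Then the predicted safe set at absolute time τ is non-decreasing as t increases: for all t₁ ≤ t₂ ≤ τ, Zˢ(τ, t₁) ⊆ Zˢ(τ, t₂). -/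
/-- The predicted safe set for absolute time `τ` based on measurements at time `t`:
the complement of the union of the agents' forward reachable sets and the static
obstacle set. -/
def SafeSet {Z U R : Type*} (f : Z → U → Z) (𝒰 : Set U)
    (Ω : R → ℕ → Set Z) (O : Set Z) (τ t : ℕ) : Set Z :=
  ((⋃ r : R, Reach f 𝒰 (τ - t) (Ω r t)) ∪ O)ᶜ

lemma Reach_mono {Z U : Type*} (f : Z → U → Z) (𝒰 : Set U) (k : ℕ)
    {S T : Set Z} (h : S ⊆ T) : Reach f 𝒰 k S ⊆ Reach f 𝒰 k T := by
  induction k with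
  | zero => exact h
  | succ k ih =>
    rintro x ⟨z, hz, u, hu, rfl⟩
    exact ⟨z, ih hz, u, hu, rfl⟩

lemma Reach_add {Z U : Type*} (f : Z → U → Z) (𝒰 : Set U) (a b : ℕ) (S : Set Z) :
    Reach f 𝒰 (a + b) S = Reach f 𝒰 a (Reach f 𝒰 b S) := by
  induction a with
  | zero => simp [Reach]
  | succ a ih =>
    rw [Nat.add_right_comm]
    show Reach f 𝒰 (a + b + 1) S = _
    simp only [Reach, ih]

lemma Omega_step {Z U R : Type*} (f : Z → U → Z) (𝒰 : Set U) (Ω : R → ℕ → Set Z)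
    (hupd : ∀ r : R, ∀ t : ℕ, Ω r (t + 1) ⊆ Reach f 𝒰 1 (Ω r t))
    (r : R) (t k : ℕ) : Ω r (t + k) ⊆ Reach f 𝒰 k (Ω r t) := by
  induction k with
  | zero => exact subset_rfl
  | succ k ih =>
    calc Ω r (t + k + 1) ⊆ Reach f 𝒰 1 (Ω r (t + k)) := hupd r (t + k)
      _ ⊆ Reach f 𝒰 1 (Reach f 𝒰 k (Ω r t)) := Reach_mono f 𝒰 1 ih
      _ = Reach f 𝒰 (k + 1) (Ω r t) := by rw [← Reach_add]; ring_nf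

theorem safeSet_nondecreasing {Z U R : Type*} [Finite R]
    (f : Z → U → Z) (𝒰 : Set U) (Ω : R → ℕ → Set Z) (O : Set Z)
    (hupd : ∀ r : R, ∀ t : ℕ, Ω r (t + 1) ⊆ Reach f 𝒰 1 (Ω r t)) :
    ∀ t₁ t₂ τ : ℕ, t₁ ≤ t₂ → t₂ ≤ τ →
      SafeSet f 𝒰 Ω O τ t₁ ⊆ SafeSet f 𝒰 Ω O τ t₂ := by
  intro t₁ t₂ τ h12 h2τ
  apply Set.compl_subset_compl.mpr
  apply Set.union_subset_union_left
  apply Set.iUnion_mono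
  intro r
  have hΩ : Ω r t₂ ⊆ Reach f 𝒰 (t₂ - t₁) (Ω r t₁) := by
    have := Omega_step f 𝒰 Ω hupd r t₁ (t₂ - t₁)
    rwa [Nat.add_sub_cancel' h12] at this
  have hτ : τ - t₂ + (t₂ - t₁) = τ - t₁ := by omega
  calc Reach f 𝒰 (τ - t₂) (Ω r t₂)
      ⊆ Reach f 𝒰 (τ - t₂) (Reach f 𝒰 (t₂ - t₁) (Ω r t₁)) := Reach_mono _ _ _ hΩ
    _ = Reach f 𝒰 (τ - t₂ + (t₂ - t₁)) (Ω r t₁) := (Reach_add ..).symm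
    _ = Reach f 𝒰 (τ - t₁) (Ω r t₁) := by rw [hτ]
end

section
/- (Theorem 1, one-step recursive feasibility.) Fix a horizon N ≥ 1. Suppose the time-varying safe sets are non-decreasing: for all t ≤ t' ≤ τ, Zˢ(τ, t) ⊆ Zˢ(τ, t'). If the MPC problem is feasible at time t from state z₀ with a feasible input sequence u₀, …, u_{N-1}, then the MPC problem is feasible at time t+1 from the successor state f z₀ u₀. (A feasible plan at time t+1 is given by the shifted sequence u₁, …, u_{N-1}, u_{N-1}.) -/
/-- `FeasiblePlan f 𝒰 𝒵 Zs N t z₀ u z` says that the input sequence `u` with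
predicted state trajectory `z` is a feasible plan for the MPC problem with
horizon `N` at time `t` from state `z₀`: the inputs are admissible, the states
follow the dynamics starting at `z₀`, the state constraints hold, the
complementarity constraints hold (at each step the state is in the predicted
safe set or the robot is stopped), and the terminal stopping constraint holds. -/
def FeasiblePlan {Z U : Type*} (f : Z → U → Z) (𝒰 : Set U) (𝒵 : Set Z)
    (Zs : ℕ → ℕ → Set Z) (N t : ℕ) (z₀ : Z) (u : ℕ → U) (z : ℕ → Z) : Prop :=
  z 0 = z₀ ∧
  (∀ k < N, u k ∈ 𝒰) ∧
  (∀ k < N, z (k + 1) = f (z k) (u k)) ∧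
  (∀ k ≤ N, z k ∈ 𝒵) ∧
  (∀ k, 1 ≤ k → k ≤ N → (z k ∈ Zs (t + k) t ∨ z k = z (k - 1))) ∧
  z N = z (N - 1)

/-- The MPC problem with horizon `N` at time `t` is feasible from `z₀`. -/
def Feasible {Z U : Type*} (f : Z → U → Z) (𝒰 : Set U) (𝒵 : Set Z)
    (Zs : ℕ → ℕ → Set Z) (N t : ℕ) (z₀ : Z) : Prop :=
  ∃ u z, FeasiblePlan f 𝒰 𝒵 Zs N t z₀ u z

/-- One-step recursive feasibility: if the safe sets are non-decreasing in the
measurement time and the MPC problem is feasible at time `t` from `z₀` with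
feasible plan `(u, z)`, then the MPC problem at time `t + 1` is feasible from
the successor state `f z₀ (u 0)`. -/
theorem one_step_recursive_feasibility {Z U : Type*}
    (f : Z → U → Z) (𝒰 : Set U) (𝒵 : Set Z) (Zs : ℕ → ℕ → Set Z)
    (N : ℕ) (hN : 1 ≤ N)
    (hmono : ∀ τ t t' : ℕ, t ≤ t' → t' ≤ τ → Zs τ t ⊆ Zs τ t')
    (t : ℕ) (z₀ : Z) (u : ℕ → U) (z : ℕ → Z)
    (hfeas : FeasiblePlan f 𝒰 𝒵 Zs N t z₀ u z) :
    Feasible f 𝒰 𝒵 Zs N (t + 1) (f z₀ (u 0)) := by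
  obtain ⟨hz0, hu, hdyn, hstate, hcomp, hterm⟩ := hfeas
  refine ⟨fun k => u (min (k + 1) (N - 1)), fun k => z (min (k + 1) N), ?_, ?_, ?_, ?_, ?_, ?_⟩
  · simp only [min_eq_left hN]
    rw [hdyn 0 hN, hz0]
  · intro k hk
    exact hu _ (lt_of_le_of_lt (min_le_right _ _) (Nat.sub_lt hN one_pos))
  · intro k hk
    beta_reduce
    rcases lt_or_ge (k + 1) N with h | h
    · rw [min_eq_left (by omega : k + 1 + 1 ≤ N), min_eq_left (by omega : k + 1 ≤ N),
        min_eq_left (by omega : k + 1 ≤ N - 1)]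
      exact hdyn (k + 1) (by omega)
    · -- k + 1 = N (since k < N)
      have hkN : k + 1 = N := by omega
      rw [min_eq_right (by omega : N ≤ k + 1 + 1), min_eq_right (by omega : N ≤ k + 1),
        show min (k+1) (N-1) = N - 1 by omega]
      calc z N = z (N - 1 + 1) := by rw [Nat.sub_add_cancel hN]
        _ = f (z (N - 1)) (u (N - 1)) := hdyn _ (by omega)
        _ = f (z N) (u (N - 1)) := by rw [hterm]
  · intro k hk
    exact hstate _ (min_le_right _ _)
  · intro k hk1 hkN
    beta_reduce
    rcases lt_or_ge (k + 1) N with h | h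
    · rw [min_eq_left (by omega : k + 1 ≤ N)]
      rcases hcomp (k + 1) (by omega) (by omega) with hin | heq
      · left
        have := hmono (t + (k + 1)) t (t + 1) (by omega) (by omega) hin
        convert this using 2
        omega
      · right
        rw [show min (k - 1 + 1) N = k by omega]
        simpa using heq
    · right
      rcases (by omega : k = N - 1 ∨ k = N) with h' | h'
      · rw [show min (k+1) N = N by omega, show min (k-1+1) N = N - 1 by omega]
        exact hterm
      · rw [show min (k+1) N = N by omega, show min (k-1+1) N = N by omega]
  · beta_reduce
    rw [min_eq_right (by omega : N ≤ N + 1), show min (N - 1 + 1) N = N by omega]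
end

section
/- (Theorem 1, recursive feasibility.) Fix a horizon N ≥ 1. Suppose the time-varying safe sets are non-decreasing: for all t ≤ t' ≤ τ, Zˢ(τ, t) ⊆ Zˢ(τ, t'). If the MPC problem is feasible at time t = 0 from an initial state z₀, then there exist closed-loop sequences z : ℕ → Z and u : ℕ → U with z 0 = z₀, u t ∈ 𝒰, and z (t+1) = f (z t) (u t) for all t, such that the MPC problem is feasible at every time t from the closed-loop state z t, with u t being the first input of a feasible plan at time t. -/
theorem shift_feasible {Z U : Type*}
    (f : Z → U → Z) (𝒰 : Set U) (𝒵 : Set Z) (Zs : ℕ → ℕ → Set Z)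
    (N : ℕ) (hN : 1 ≤ N)
    (hmono : ∀ τ t t' : ℕ, t ≤ t' → t' ≤ τ → Zs τ t ⊆ Zs τ t')
    (t : ℕ) (z₀ : Z) (u : ℕ → U) (z : ℕ → Z)
    (h : FeasiblePlan f 𝒰 𝒵 Zs N t z₀ u z) :
    Feasible f 𝒰 𝒵 Zs N (t + 1) (f z₀ (u 0)) := by
  obtain ⟨hz0, hu, hdyn, hZ, hcomp, hterm⟩ := h
  have hz1 : z 1 = f z₀ (u 0) := by rw [hdyn 0 hN, hz0]
  refine ⟨fun k => if k < N - 1 then u (k + 1) else u (N - 1),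
    fun k => z (min (k + 1) N), ?_, ?_, ?_, ?_, ?_, ?_⟩
  · simp [Nat.min_eq_left hN, hz1]
  · intro k hk
    dsimp only
    split
    · exact hu _ (by omega)
    · exact hu _ (by omega)
  · intro k hk
    dsimp only
    by_cases hk' : k < N - 1
    · have h1 : min (k + 1 + 1) N = k + 2 := by omega
      have h2 : min (k + 1) N = k + 1 := by omega
      rw [h1, h2, if_pos hk']
      exact hdyn (k + 1) (by omega)
    · have hkN : k = N - 1 := by omega
      have h1 : min (k + 1 + 1) N = N := by omega
      have h2 : min (k + 1) N = N := by omega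
      rw [h1, h2, if_neg hk']
      have hd : z N = f (z (N - 1)) (u (N - 1)) := by
        have := hdyn (N - 1) (by omega)
        rwa [Nat.sub_add_cancel hN] at this
      conv_rhs => rw [hterm]
      exact hd
  · intro k _
    exact hZ _ (Nat.min_le_right _ _)
  · intro k hk1 hkN
    dsimp only
    by_cases hk' : k + 1 ≤ N
    · have h2 : min (k + 1) N = k + 1 := by omega
      have h3 : min (k - 1 + 1) N = k := by omega
      rw [h2, h3]
      rcases hcomp (k + 1) (by omega) hk' with hc | hc
      · left
        have : t + (k + 1) = t + 1 + k := by omega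
        rw [this] at hc
        exact hmono _ t (t + 1) (by omega) (by omega) hc
      · right
        simpa using hc
    · have hkN' : k = N := by omega
      have h2 : min (k + 1) N = N := by omega
      have h3 : min (k - 1 + 1) N = N := by omega
      rw [h2, h3]
      exact Or.inr rfl
  · dsimp only
    have h2 : min (N + 1) N = N := by omega
    have h3 : min (N - 1 + 1) N = N := by omega
    rw [h2, h3]

/-- Recursive feasibility: if the safe sets are non-decreasing in the
measurement time and the MPC problem is feasible at time `0` from `z₀`, then
there are closed-loop state and input sequences starting at `z₀`, following the
dynamics, such that at every time `t` the MPC problem is feasible from the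
closed-loop state `z t` via a feasible plan whose first input is `u t`. -/
theorem recursive_feasibility {Z U : Type*}
    (f : Z → U → Z) (𝒰 : Set U) (𝒵 : Set Z) (Zs : ℕ → ℕ → Set Z)
    (N : ℕ) (hN : 1 ≤ N)
    (hmono : ∀ τ t t' : ℕ, t ≤ t' → t' ≤ τ → Zs τ t ⊆ Zs τ t')
    (z₀ : Z) (hfeas0 : Feasible f 𝒰 𝒵 Zs N 0 z₀) :
    ∃ (z : ℕ → Z) (u : ℕ → U),
      z 0 = z₀ ∧
      (∀ t : ℕ, u t ∈ 𝒰) ∧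
      (∀ t : ℕ, z (t + 1) = f (z t) (u t)) ∧
      (∀ t : ℕ, ∃ (up : ℕ → U) (zp : ℕ → Z),
        FeasiblePlan f 𝒰 𝒵 Zs N t (z t) up zp ∧ up 0 = u t) := by
  classical
  let Zt : ∀ t : ℕ, {zt : Z // Feasible f 𝒰 𝒵 Zs N t zt} := fun t =>
    Nat.rec ⟨z₀, hfeas0⟩
      (fun t p => ⟨f p.1 (p.2.choose 0),
        shift_feasible f 𝒰 𝒵 Zs N hN hmono t p.1 p.2.choose
          p.2.choose_spec.choose p.2.choose_spec.choose_spec⟩) t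
  refine ⟨fun t => (Zt t).1, fun t => (Zt t).2.choose 0, rfl, ?_, ?_, ?_⟩
  · intro t
    exact (Zt t).2.choose_spec.choose_spec.2.1 0 hN
  · intro t
    rfl
  · intro t
    exact ⟨(Zt t).2.choose, (Zt t).2.choose_spec.choose,
      (Zt t).2.choose_spec.choose_spec, rfl⟩
end

section
/- (Capsule decomposition into two disks and a rectangle.) In the Euclidean plane E = EuclideanSpace ℝ (Fin 2), let a ≠ b, let r ≥ 0, and let n be a unit vector orthogonal to b - a. Then the capsule of radius r around the segment [a, b] decomposes as the union of two closed disks and a rectangle: ⋃_{z ∈ segment ℝ a b} closedBall z r = closedBall a r ∪ closedBall b r ∪ convexHull ℝ {a + r•n, a - r•n, b + r•n, b - r•n}. -/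
open scoped RealInnerProductSpace

set_option maxHeartbeats 1000000 in
/-- Capsule decomposition in the Euclidean plane: the capsule of radius `r`
around the segment `[a, b]` is the union of the two closed disks centered at
the endpoints and the rectangle given by the convex hull of the four points
obtained by translating the endpoints by `±r` along a unit normal `n`. -/
theorem capsule_decomposition (a b : EuclideanSpace ℝ (Fin 2)) (hab : a ≠ b)
    (r : ℝ) (hr : 0 ≤ r) (n : EuclideanSpace ℝ (Fin 2)) (hn : ‖n‖ = 1)
    (horth : ⟪n, b - a⟫ = 0) :
    (⋃ z ∈ segment ℝ a b, Metric.closedBall z r)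
      = Metric.closedBall a r ∪ Metric.closedBall b r ∪
        convexHull ℝ ({a + r • n, a - r • n, b + r • n, b - r • n} :
          Set (EuclideanSpace ℝ (Fin 2))) := by
  have hn0 : n ≠ 0 := fun h => by simp [h] at hn
  have hv0 : b - a ≠ 0 := sub_ne_zero.2 hab.symm
  -- any vector orthogonal to n is a multiple of b - a
  have key : ∀ w : EuclideanSpace ℝ (Fin 2), ⟪n, w⟫ = 0 → ∃ k : ℝ, w = k • (b - a) := by
    intro w hw
    have hdim : Module.finrank ℝ (EuclideanSpace ℝ (Fin 2)) = 2 := by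
      simp [finrank_euclideanSpace]
    have h1 : Module.finrank ℝ (ℝ ∙ n) = 1 := finrank_span_singleton hn0
    have h2 : Module.finrank ℝ ((ℝ ∙ n)ᗮ) = 1 := by
      have h3 := Submodule.finrank_add_finrank_orthogonal (K := ℝ ∙ n)
      rw [h1, hdim] at h3
      omega
    have hvmem : b - a ∈ (ℝ ∙ n)ᗮ := by
      intro y hy
      obtain ⟨c, rfl⟩ := Submodule.mem_span_singleton.1 hy
      rw [real_inner_smul_left, horth, mul_zero]
    have hspan : (ℝ ∙ (b - a)) = (ℝ ∙ n)ᗮ := by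
      apply Submodule.eq_of_le_of_finrank_le
        (Submodule.span_le.2 (Set.singleton_subset_iff.2 hvmem))
      rw [h2, finrank_span_singleton hv0]
    have hwmem : w ∈ (ℝ ∙ n)ᗮ := by
      intro y hy
      obtain ⟨c, rfl⟩ := Submodule.mem_span_singleton.1 hy
      rw [real_inner_smul_left, hw, mul_zero]
    rw [← hspan, Submodule.mem_span_singleton] at hwmem
    obtain ⟨k, hk⟩ := hwmem
    exact ⟨k, hk.symm⟩
  have hnn : ⟪n, n⟫ = 1 := by
    rw [real_inner_self_eq_norm_sq, hn]; norm_num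
  have hnorm : ∀ p q : ℝ, ‖p • (b - a) + q • n‖ ^ 2 = p ^ 2 * ‖b - a‖ ^ 2 + q ^ 2 := by
    intro p q
    rw [norm_add_sq_real, norm_smul, norm_smul, hn, real_inner_smul_left,
      real_inner_smul_right, real_inner_comm, horth]
    simp [mul_pow, sq_abs]
  apply Set.Subset.antisymm
  · -- ⊆ direction
    intro x hx
    simp only [Set.mem_iUnion, Metric.mem_closedBall] at hx
    obtain ⟨z, hz, hxz⟩ := hx
    rw [segment_eq_image'] at hz
    obtain ⟨t, ⟨ht0, ht1⟩, rfl⟩ := hz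
    set z := a + t • (b - a) with hzdef
    set c := ⟪n, x - z⟫ with hc
    obtain ⟨k, hk⟩ := key (x - z - c • n) (by
      rw [inner_sub_right, real_inner_smul_right, hnn, mul_one, sub_self])
    have hxrepr : x = a + (t + k) • (b - a) + c • n := by
      have : x - z = k • (b - a) + c • n := by
        rw [← hk]; abel
      have hx' : x = z + (k • (b - a) + c • n) := by
        rw [← this]; abel
      rw [hx', hzdef]; module
    have hbound : k ^ 2 * ‖b - a‖ ^ 2 + c ^ 2 ≤ r ^ 2 := by
      have h1 : ‖x - z‖ ≤ r := by rwa [← dist_eq_norm]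
      have h2 : x - z = k • (b - a) + c • n := by rw [← hk]; abel
      have := hnorm k c
      rw [← h2] at this
      nlinarith [norm_nonneg (x - z)]
    have hc2 : c ^ 2 ≤ r ^ 2 := by nlinarith [sq_nonneg k, sq_nonneg ‖b - a‖]
    set τ := t + k with hτ
    rcases le_or_gt τ 0 with h0 | h0
    · -- left disk
      refine Or.inl (Or.inl ?_)
      rw [Metric.mem_closedBall, dist_eq_norm]
      have hxa : x - a = τ • (b - a) + c • n := by rw [hxrepr]; module
      have hτk : τ ^ 2 ≤ k ^ 2 := by nlinarith
      have h3 : ‖x - a‖ ^ 2 ≤ r ^ 2 := by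
        rw [hxa, hnorm]
        nlinarith [sq_nonneg ‖b - a‖]
      nlinarith [norm_nonneg (x - a)]
    rcases le_or_gt 1 τ with h1 | h1
    · -- right disk
      refine Or.inl (Or.inr ?_)
      rw [Metric.mem_closedBall, dist_eq_norm]
      have hxb : x - b = (τ - 1) • (b - a) + c • n := by rw [hxrepr]; module
      have hτk : (τ - 1) ^ 2 ≤ k ^ 2 := by nlinarith
      have h3 : ‖x - b‖ ^ 2 ≤ r ^ 2 := by
        rw [hxb, hnorm]
        nlinarith [sq_nonneg ‖b - a‖]
      nlinarith [norm_nonneg (x - b)]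
    · -- rectangle
      refine Or.inr ?_
      have hcabs : -r ≤ c ∧ c ≤ r := by constructor <;> nlinarith
      have hmem1 : a + r • n ∈ convexHull ℝ ({a + r • n, a - r • n, b + r • n, b - r • n} :
          Set (EuclideanSpace ℝ (Fin 2))) := subset_convexHull ℝ _ (by simp)
      have hmem2 : a - r • n ∈ convexHull ℝ ({a + r • n, a - r • n, b + r • n, b - r • n} :
          Set (EuclideanSpace ℝ (Fin 2))) := subset_convexHull ℝ _ (by simp)
      have hmem3 : b + r • n ∈ convexHull ℝ ({a + r • n, a - r • n, b + r • n, b - r • n} :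
          Set (EuclideanSpace ℝ (Fin 2))) := subset_convexHull ℝ _ (by simp)
      have hmem4 : b - r • n ∈ convexHull ℝ ({a + r • n, a - r • n, b + r • n, b - r • n} :
          Set (EuclideanSpace ℝ (Fin 2))) := subset_convexHull ℝ _ (by simp)
      have hconv := convex_convexHull ℝ ({a + r • n, a - r • n, b + r • n, b - r • n} :
          Set (EuclideanSpace ℝ (Fin 2)))
      have hmid : ∀ p : EuclideanSpace ℝ (Fin 2),
          p + c • n ∈ segment ℝ (p + r • n) (p - r • n) := by
        intro p
        rcases eq_or_lt_of_le hr with hr0 | hr0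
        · have hc0 : c = 0 := by nlinarith
          rw [hc0, ← hr0]
          simpa using left_mem_segment ℝ p p
        · refine ⟨(r + c) / (2 * r), (r - c) / (2 * r), ?_, ?_, ?_, ?_⟩
          · exact div_nonneg (by linarith [hcabs.1]) (by linarith)
          · exact div_nonneg (by linarith [hcabs.2]) (by linarith)
          · field_simp
            ring
          · match_scalars <;> field_simp <;> ring
      have hh1 := hconv.segment_subset hmem1 hmem2 (hmid a)
      have hh2 := hconv.segment_subset hmem3 hmem4 (hmid b)
      have hx' : x = (1 - τ) • (a + c • n) + τ • (b + c • n) := by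
        rw [hxrepr]; module
      rw [hx']
      exact hconv hh1 hh2 (by linarith) h0.le (by ring)
  · -- ⊇ direction
    have hconvcap : Convex ℝ (⋃ z ∈ segment ℝ a b, Metric.closedBall z r) := by
      intro x hx y hy s t hs ht hst
      simp only [Set.mem_iUnion, Metric.mem_closedBall] at hx hy ⊢
      obtain ⟨zx, hzx, hxd⟩ := hx
      obtain ⟨zy, hzy, hyd⟩ := hy
      refine ⟨s • zx + t • zy, (convex_segment a b) hzx hzy hs ht hst, ?_⟩
      calc dist (s • x + t • y) (s • zx + t • zy)
          = ‖s • (x - zx) + t • (y - zy)‖ := by rw [dist_eq_norm]; congr 1; module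
        _ ≤ ‖s • (x - zx)‖ + ‖t • (y - zy)‖ := norm_add_le _ _
        _ = s * ‖x - zx‖ + t * ‖y - zy‖ := by
            rw [norm_smul, norm_smul, Real.norm_of_nonneg hs, Real.norm_of_nonneg ht]
        _ ≤ s * r + t * r := by
            gcongr <;> first | rwa [← dist_eq_norm] | assumption
        _ = r := by rw [← add_mul, hst, one_mul]
    have hsub : ∀ p : EuclideanSpace ℝ (Fin 2), p ∈ segment ℝ a b →
        Metric.closedBall p r ⊆ ⋃ z ∈ segment ℝ a b, Metric.closedBall z r := by
      intro p hp
      exact Set.subset_biUnion_of_mem (u := fun z => Metric.closedBall z r) hp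
    refine Set.union_subset (Set.union_subset ?_ ?_) ?_
    · exact hsub a (left_mem_segment ℝ a b)
    · exact hsub b (right_mem_segment ℝ a b)
    · apply convexHull_min _ hconvcap
      have hrn : ∀ p : EuclideanSpace ℝ (Fin 2), p ∈ segment ℝ a b →
          ∀ (s : ℝ), |s| = r → p + s • n ∈ ⋃ z ∈ segment ℝ a b, Metric.closedBall z r := by
        intro p hp s hs
        apply hsub p hp
        rw [Metric.mem_closedBall, dist_eq_norm]
        simp [norm_smul, hn, hs]
      intro y hy
      simp only [Set.mem_insert_iff, Set.mem_singleton_iff] at hy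
      rcases hy with rfl | rfl | rfl | rfl
      · exact hrn a (left_mem_segment ℝ a b) r (abs_of_nonneg hr)
      · have : a - r • n = a + (-r) • n := by module
        rw [this]
        exact hrn a (left_mem_segment ℝ a b) (-r) (by rw [abs_neg, abs_of_nonneg hr])
      · exact hrn b (right_mem_segment ℝ a b) r (abs_of_nonneg hr)
      · have : b - r • n = b + (-r) • n := by module
        rw [this]
        exact hrn b (right_mem_segment ℝ a b) (-r) (by rw [abs_neg, abs_of_nonneg hr])
end
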